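/- Let α be irrational with convergent denominators (q_k). If q_k^{1/k} → ∞, then α is singular on average: for every c > 0, the density of ℓ ∈ {1,…,N} for which the system ‖qα‖ ≤ c·2^{−ℓ}, 0 < q ≤ 2^ℓ has an integer solution tends to 1. -/

import Mathlib

/-!
If `q_k ≤ 2^ℓ < q_{k+1}`, then `q = q_k` solves `‖qα‖ ≤ c·2^{-ℓ}, 0 < q ≤ 2^ℓ` as soon as
`2^ℓ ≤ c·q_{k+1}`, because `‖q_k α‖ ≤ 1/q_{k+1}`. Hence every failing `ℓ` lies in a window
`c·q_{k+1} < 2^ℓ < q_{k+1}`, which holds at most `M` integers once `c·2^M ≥ 1`. The failing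
`ℓ ≤ N` only meet windows with `q_k ≤ 2^N`, and since `q_k ≥ 2^{bk}` eventually for every `b`,
there are at most `k₀ + N/b + 1` of those: the failing proportion is `O(M/b)` for every `b`.
-/

open Filter MeasureTheory

/-- Distance from a real number to the nearest integer. -/
noncomputable def nint (x : ℝ) : ℝ := |x - round x|

/-- The denominator `q_k` of the `k`-th continued fraction convergent of `α`. -/
noncomputable def cfDen (α : ℝ) (k : ℕ) : ℝ := (GenContFract.of α).dens k

open scoped Classical

/-- `α` is singular on average: for every `c > 0`, the density of those `ℓ ∈ {1,…,N}`
for which `‖qα‖ ≤ c·2^{-ℓ}` has a solution with `0 < q ≤ 2^ℓ` tends to `1`. -/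
noncomputable def SingularOnAverage (α : ℝ) : Prop :=
  ∀ c : ℝ, 0 < c →
    Tendsto (fun N : ℕ =>
      (((Finset.Icc 1 N).filter (fun ℓ : ℕ =>
        ∃ q : ℕ, 0 < q ∧ q ≤ 2 ^ ℓ ∧ nint (q * α) ≤ c * 2 ^ (-(ℓ : ℤ)))).card : ℝ) / N)
      atTop (nhds 1)

namespace GenContFract

variable {K : Type*} [Field K] [LinearOrder K] [FloorRing K]

theorem exists_int_eq_contsAux (v : K) (n : ℕ) :
    ∃ a b : ℤ, (GenContFract.of v).contsAux n = ⟨a, b⟩ := by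
  induction n using Nat.twoStepInduction with
  | zero => exact ⟨1, 0, by simp [zeroth_contAux_eq_one_zero]⟩
  | one => exact ⟨⌊v⌋, 1, by simp [first_contAux_eq_h_one, of_h_eq_floor]⟩
  | more n ih₀ ih₁ =>
    obtain ⟨a₀, b₀, h₀⟩ := ih₀
    obtain ⟨a₁, b₁, h₁⟩ := ih₁
    cases hs : (GenContFract.of v).s.get? n with
    | none => exact ⟨a₁, b₁, (contsAux_stable_step_of_terminated hs).trans h₁⟩
    | some gp =>
      obtain ⟨ha, z, hz⟩ := of_partNum_eq_one_and_exists_int_partDen_eq hs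
      refine ⟨z * a₁ + a₀, z * b₁ + b₀, ?_⟩
      rw [contsAux_recurrence hs h₀ h₁, ha, hz]
      push_cast
      ring_nf

theorem exists_int_eq_nums (v : K) (n : ℕ) : ∃ a : ℤ, (GenContFract.of v).nums n = a := by
  obtain ⟨a, b, h⟩ := exists_int_eq_contsAux v (n + 1)
  exact ⟨a, by rw [num_eq_conts_a, nth_cont_eq_succ_nth_contAux, h]⟩

theorem exists_nat_eq_dens [IsStrictOrderedRing K] (v : K) (n : ℕ) :
    ∃ q : ℕ, (GenContFract.of v).dens n = q := by
  obtain ⟨a, b, h⟩ := exists_int_eq_contsAux v (n + 1)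
  have hb : (GenContFract.of v).dens n = b := by
    rw [den_eq_conts_b, nth_cont_eq_succ_nth_contAux, h]
  have hb0 : 0 ≤ b := by exact_mod_cast hb ▸ zero_le_of_den
  exact ⟨b.toNat, by rw [hb]; exact_mod_cast (Int.toNat_of_nonneg hb0).symm⟩

theorem not_terminatedAt_of_irrational {α : ℝ} (hα : Irrational α) (n : ℕ) :
    ¬(GenContFract.of α).TerminatedAt n := fun h ↦
  let ⟨q, hq⟩ := exists_rat_eq_of_terminates ⟨n, h⟩
  hα ⟨q, hq.symm⟩

end GenContFract

open GenContFract Finset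

theorem nint_le_abs_sub_intCast (x : ℝ) (m : ℤ) : nint x ≤ |x - m| := round_le x m

theorem cfDen_zero (α : ℝ) : cfDen α 0 = 1 := zeroth_den_eq_one

theorem cfDen_mono (α : ℝ) : Monotone (cfDen α) :=
  monotone_nat_of_le_succ fun _ ↦ of_den_mono

theorem one_le_cfDen (α : ℝ) (n : ℕ) : 1 ≤ cfDen α n :=
  cfDen_zero α ▸ cfDen_mono α n.zero_le

theorem natCast_le_cfDen {α : ℝ} (hα : Irrational α) (n : ℕ) : (n : ℝ) ≤ cfDen α n := by
  have hfib : (Nat.fib (n + 1) : ℝ) ≤ cfDen α n :=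
    succ_nth_fib_le_of_nth_den (Or.inr (not_terminatedAt_of_irrational hα _))
  have : n ≤ Nat.fib (n + 1) := by have := Nat.le_fib_add_one (n + 1); omega
  exact le_trans (by exact_mod_cast this) hfib

theorem nint_cfDen_mul_le {α : ℝ} (hα : Irrational α) (n : ℕ) :
    nint (cfDen α n * α) ≤ (cfDen α (n + 1))⁻¹ := by
  obtain ⟨p, hp⟩ := exists_int_eq_nums α n
  have hq : 0 < cfDen α n := zero_lt_one.trans_le (one_le_cfDen α n)
  have hconv : (GenContFract.of α).convs n = p / cfDen α n := by
    rw [conv_eq_num_div_den, hp]; rfl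
  calc nint (cfDen α n * α) ≤ |cfDen α n * α - p| := nint_le_abs_sub_intCast _ p
    _ = cfDen α n * |α - (GenContFract.of α).convs n| := by
      rw [hconv, ← abs_of_pos hq, ← abs_mul, abs_of_pos hq, mul_sub, mul_div_cancel₀ _ hq.ne']
    _ ≤ cfDen α n * (1 / (cfDen α n * cfDen α (n + 1))) :=
      mul_le_mul_of_nonneg_left (abs_sub_convs_le (not_terminatedAt_of_irrational hα n)) hq.le
    _ = (cfDen α (n + 1))⁻¹ := by field_simp

theorem exists_le_lt_succ_of_le_of_lt {f : ℕ → ℝ} {x : ℝ} (h₀ : f 0 ≤ x) {n : ℕ} (hn : x < f n) :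
    ∃ k, f k ≤ x ∧ x < f (k + 1) := by
  induction n with
  | zero => exact absurd hn h₀.not_gt
  | succ n ih => exact (lt_or_ge x (f n)).elim ih fun h ↦ ⟨n, h, hn⟩

theorem exists_cfDen_le_lt {α : ℝ} (hα : Irrational α) {x : ℝ} (hx : 1 ≤ x) :
    ∃ k, cfDen α k ≤ x ∧ x < cfDen α (k + 1) := by
  obtain ⟨n, hn⟩ := exists_nat_gt x
  exact exists_le_lt_succ_of_le_of_lt (cfDen_zero α ▸ hx) (hn.trans_le (natCast_le_cfDen hα n))

theorem card_filter_lt_two_pow_lt_le {c x : ℝ} {M : ℕ} (hM : 1 ≤ c * 2 ^ M)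
    (s : Finset ℕ) : #(s.filter fun ℓ ↦ c * x < 2 ^ ℓ ∧ (2 : ℝ) ^ ℓ < x) ≤ M := by
  set t := s.filter fun ℓ ↦ c * x < 2 ^ ℓ ∧ (2 : ℝ) ^ ℓ < x
  rcases t.eq_empty_or_nonempty with ht | ht
  · simp [ht]
  have hsub : t ⊆ Ico (t.min' ht) (t.min' ht + M) := by
    intro ℓ hℓ
    have ha := (mem_filter.1 (t.min'_mem ht)).2.1
    have hℓx := (mem_filter.1 hℓ).2.2
    have hx : 0 < x := (pow_pos two_pos ℓ).trans hℓx
    refine mem_Ico.2 ⟨t.min'_le ℓ hℓ, ?_⟩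
    have : (2 : ℝ) ^ ℓ < 2 ^ (t.min' ht + M) := by
      calc (2 : ℝ) ^ ℓ < x := hℓx
        _ ≤ x * (c * 2 ^ M) := le_mul_of_one_le_right hx.le hM
        _ = c * x * 2 ^ M := by ring
        _ ≤ 2 ^ t.min' ht * 2 ^ M := by gcongr
        _ = 2 ^ (t.min' ht + M) := (pow_add ..).symm
    exact (pow_lt_pow_iff_right₀ one_lt_two).1 this
  simpa using card_le_card hsub

-- The predicate filtered in `SingularOnAverage α`, for the constant `c`.
def HasDirichletSolution (α c : ℝ) (ℓ : ℕ) : Prop :=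
  ∃ q : ℕ, 0 < q ∧ q ≤ 2 ^ ℓ ∧ nint (q * α) ≤ c * 2 ^ (-(ℓ : ℤ))

theorem hasDirichletSolution_of_cfDen {α c : ℝ} (hα : Irrational α) {k ℓ : ℕ}
    (hk : cfDen α k ≤ 2 ^ ℓ) (hc : 2 ^ ℓ ≤ c * cfDen α (k + 1)) :
    HasDirichletSolution α c ℓ := by
  obtain ⟨q, hq⟩ := exists_nat_eq_dens α k
  have hq' : cfDen α k = q := hq
  refine ⟨q, by exact_mod_cast hq' ▸ zero_lt_one.trans_le (one_le_cfDen α k), ?_, ?_⟩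
  · exact_mod_cast hq' ▸ hk
  · have hq₁ : 0 < cfDen α (k + 1) := zero_lt_one.trans_le (one_le_cfDen α _)
    calc nint (q * α) ≤ (cfDen α (k + 1))⁻¹ := hq' ▸ nint_cfDen_mul_le hα k
      _ ≤ c * 2 ^ (-(ℓ : ℤ)) := by
        rw [zpow_neg, zpow_natCast, inv_le_iff_one_le_mul₀ hq₁]
        rwa [mul_right_comm, ← div_eq_mul_inv, one_le_div (by positivity)]

theorem eventually_pow_le_of_tendsto_rpow_inv {f : ℕ → ℝ} (hf : ∀ k, 0 ≤ f k)
    (h : Tendsto (fun k : ℕ ↦ f k ^ (k : ℝ)⁻¹) atTop atTop) (x : ℝ) :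
    ∀ᶠ k in atTop, x ^ k ≤ f k := by
  filter_upwards [h.eventually_ge_atTop |x|, eventually_ge_atTop 1] with k hk hk1
  calc x ^ k ≤ |x| ^ k := (le_abs_self _).trans (abs_pow x k).le
    _ ≤ (f k ^ (k : ℝ)⁻¹) ^ k := pow_le_pow_left₀ (abs_nonneg x) hk k
    _ = f k := Real.rpow_inv_natCast_pow (hf k) (by omega)

theorem tendsto_div_natCast_zero_of_le_add_mul {u : ℕ → ℝ} (hu : ∀ N, 0 ≤ u N)
    (h : ∀ δ > 0, ∃ C, ∀ N, u N ≤ C + δ * N) :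
    Tendsto (fun N : ℕ ↦ u N / N) atTop (nhds 0) := by
  refine tendsto_order.2
    ⟨fun a ha ↦ .of_forall fun N ↦ ha.trans_le (div_nonneg (hu N) N.cast_nonneg), fun a ha ↦ ?_⟩
  obtain ⟨C, hC⟩ := h (a / 2) (half_pos ha)
  filter_upwards [(tendsto_const_div_atTop_nhds_zero_nat C).eventually (gt_mem_nhds (half_pos ha)),
    eventually_gt_atTop 0] with N hCN hN
  have hN' : (0 : ℝ) < N := by exact_mod_cast hN
  calc u N / N ≤ (C + a / 2 * N) / N := by gcongr; exact hC N
    _ = C / N + a / 2 := by field_simp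
    _ < a := by linarith

theorem le_add_div_of_two_pow_mul_le {f : ℕ → ℝ} {b k₀ : ℕ} (hb : 0 < b)
    (hf : ∀ k ≥ k₀, (2 : ℝ) ^ (b * k) ≤ f k) {k N : ℕ} (hk : f k ≤ 2 ^ N) : k ≤ k₀ + N / b := by
  rcases lt_or_ge k k₀ with h | h
  · exact h.le.trans (Nat.le_add_right _ _)
  have : b * k ≤ N := (pow_le_pow_iff_right₀ one_lt_two).1 ((hf k h).trans hk)
  have : k ≤ N / b := (Nat.le_div_iff_mul_le hb).2 (by linarith)
  omega

theorem card_filter_not_hasDirichletSolution_le {α c : ℝ} (hα : Irrational α) {M : ℕ}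
    (hM : 1 ≤ c * 2 ^ M) {b k₀ : ℕ} (hb : 0 < b) (hk₀ : ∀ k ≥ k₀, (2 : ℝ) ^ (b * k) ≤ cfDen α k)
    (N : ℕ) : #((Icc 1 N).filter fun ℓ ↦ ¬HasDirichletSolution α c ℓ) ≤ (k₀ + N / b + 1) * M := by
  calc _ ≤ #((range (k₀ + N / b + 1)).biUnion fun k ↦ (Icc 1 N).filter fun ℓ ↦
          c * cfDen α (k + 1) < 2 ^ ℓ ∧ (2 : ℝ) ^ ℓ < cfDen α (k + 1)) := by
        refine card_le_card fun ℓ hℓ ↦ ?_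
        obtain ⟨hℓN, hbad⟩ := mem_filter.1 hℓ
        obtain ⟨k, hk, hk'⟩ := exists_cfDen_le_lt hα (one_le_pow₀ one_le_two : (1 : ℝ) ≤ 2 ^ ℓ)
        have hkN : k ≤ k₀ + N / b := le_add_div_of_two_pow_mul_le hb hk₀
          (hk.trans (pow_le_pow_right₀ one_le_two (mem_Icc.1 hℓN).2))
        exact mem_biUnion.2 ⟨k, mem_range.2 (by omega), mem_filter.2
          ⟨hℓN, not_le.1 (mt (hasDirichletSolution_of_cfDen hα hk) hbad), hk'⟩⟩
    _ ≤ _ := (card_biUnion_le_card_mul _ _ _ fun _ _ ↦ card_filter_lt_two_pow_lt_le hM _).trans_eq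
        (by rw [card_range])

theorem exists_card_filter_not_hasDirichletSolution_le_add_mul {α c : ℝ} (hα : Irrational α)
    (hq : Tendsto (fun k : ℕ ↦ cfDen α k ^ (k : ℝ)⁻¹) atTop atTop) {M : ℕ} (hM : 1 ≤ c * 2 ^ M)
    {δ : ℝ} (hδ : 0 < δ) :
    ∃ C, ∀ N : ℕ, (#((Icc 1 N).filter fun ℓ ↦ ¬HasDirichletSolution α c ℓ) : ℝ) ≤ C + δ * N := by
  obtain ⟨b, hb⟩ := exists_nat_gt (M / δ)
  have hb₀ : (0 : ℝ) < b := (div_nonneg M.cast_nonneg hδ.le).trans_lt hb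
  have hMb : (M : ℝ) / b ≤ δ := by
    rw [div_lt_iff₀ hδ] at hb
    rw [div_le_iff₀ hb₀]
    linarith
  obtain ⟨k₀, hk₀⟩ := (eventually_pow_le_of_tendsto_rpow_inv
    (fun k ↦ zero_le_one.trans (one_le_cfDen α k)) hq (2 ^ b)).exists_forall_of_atTop
  refine ⟨(k₀ + 1) * M, fun N ↦ ?_⟩
  have hcount := card_filter_not_hasDirichletSolution_le hα hM (by exact_mod_cast hb₀)
    (fun k hk ↦ pow_mul (2 : ℝ) b k ▸ hk₀ k hk) N
  calc (#((Icc 1 N).filter fun ℓ ↦ ¬HasDirichletSolution α c ℓ) : ℝ)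
      ≤ (k₀ + (N / b : ℕ) + 1) * M := by exact_mod_cast hcount
    _ ≤ (k₀ + N / b + 1) * M := by gcongr; exact Nat.cast_div_le
    _ = (k₀ + 1) * M + M / b * N := by ring
    _ ≤ (k₀ + 1) * M + δ * N := by gcongr

theorem tendsto_card_filter_div_of_tendsto_card_filter_not_div {p : ℕ → Prop} [DecidablePred p]
    (h : Tendsto (fun N : ℕ ↦ (#((Icc 1 N).filter fun ℓ ↦ ¬p ℓ) : ℝ) / N) atTop (nhds 0)) :
    Tendsto (fun N : ℕ ↦ (#((Icc 1 N).filter p) : ℝ) / N) atTop (nhds 1) := by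
  rw [show (1 : ℝ) = 1 - 0 by norm_num]
  refine (tendsto_const_nhds.sub h).congr' ?_
  filter_upwards [eventually_gt_atTop 0] with N hN
  have hsplit : (#((Icc 1 N).filter p) : ℝ) + #((Icc 1 N).filter fun ℓ ↦ ¬p ℓ) = N := by
    exact_mod_cast (card_filter_add_card_filter_not p).trans (Nat.card_Icc 1 N)
  rw [eq_div_iff (by positivity), sub_mul, div_mul_cancel₀ _ (by positivity)]
  linarith

theorem stmt8 (α : ℝ) (hα : Irrational α)
    (hq : Tendsto (fun k : ℕ => cfDen α k ^ ((k : ℝ)⁻¹)) atTop atTop) :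
    SingularOnAverage α := by
  intro c hc
  obtain ⟨M, hM⟩ : ∃ M : ℕ, 1 ≤ c * 2 ^ M := by
    obtain ⟨M, hM⟩ := pow_unbounded_of_one_lt c⁻¹ one_lt_two
    exact ⟨M, ((inv_lt_iff_one_lt_mul₀' hc).1 hM).le⟩
  exact tendsto_card_filter_div_of_tendsto_card_filter_not_div <|
    tendsto_div_natCast_zero_of_le_add_mul (fun _ ↦ Nat.cast_nonneg _)
      fun _ hδ ↦ exists_card_filter_not_hasDirichletSolution_le_add_mul hα hq hM hδ
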